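/- Let n ≥ 2, λ > 1/(n−1), μ < 0, and let f be the unique global solution on [0,∞) of f'' + ((n-1)/r)(1+f'²)f' = (1/λ)(1+f'²)²/(r f' − f) with f(0) = μ, f'(0) = 0 and r f'(r) > f(r) for all r ≥ 0. Then lim_{r→∞} r f'(r)/f(r) = λ(n−1)/(λ(n−1) − 1). -/

import Mathlib

open Set Filter Topology

/-- `f` is a global `C¹([0,∞)) ∩ C²((0,∞))` solution of the radially symmetric
self-similar inverse mean curvature flow ODE
`f'' + ((n-1)/r)(1+f'²)f' = (1/λ)(1+f'²)²/(r f' - f)`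
with `f(0) = μ`, `f'(0) = 0` and `r f'(r) - f(r) > 0` on `[0,∞)`. -/
def IsIMCFSolGlobal (n : ℕ) (lam mu : ℝ) (f : ℝ → ℝ) : Prop :=
  ContinuousOn f (Set.Ici 0) ∧
  ContinuousOn (deriv f) (Set.Ici 0) ∧
  (∀ r ∈ Set.Ioi (0 : ℝ), DifferentiableAt ℝ f r) ∧
  (∀ r ∈ Set.Ioi (0 : ℝ), DifferentiableAt ℝ (deriv f) r) ∧
  ContinuousOn (deriv (deriv f)) (Set.Ioi 0) ∧
  (∀ r ∈ Set.Ioi (0 : ℝ),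
    deriv (deriv f) r + ((n : ℝ) - 1) / r * (1 + (deriv f r) ^ 2) * deriv f r
      = 1 / lam * (1 + (deriv f r) ^ 2) ^ 2 / (r * deriv f r - f r)) ∧
  f 0 = mu ∧ deriv f 0 = 0 ∧
  (∀ r ∈ Set.Ici (0 : ℝ), r * deriv f r - f r > 0)

/-!
Write `v = f'` and `w = r f' - f > 0`. The equation reads `f'' = (1 + v²) D / (λ r w)` with
`D = r (1 + v²) - λ (n - 1) v w`. Where `v ≤ 0` we have `D > 0`, and at a zero of `D` the
derivative of `D` is `1 + v² > 0`; a first-crossing argument using `v(0) = 0` shows `v > 0` and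
then `D > 0` on `(0, ∞)`, so `f` is strictly convex. If `v` stayed bounded, convexity
would give `w = o(r)`, and the equation then forces `r f'' ≥ 1` eventually, so `v` grows like
`log r` after all: `f, f' → ∞`.

The ratio `q = r f' / f` satisfies `r q' = Φ(q, f')`. With `c = λ (n - 1)` and `α = c / (c - 1)`,
the leading part of `Φ` for large `f'` is `f'² q (c - 1) (α - q) / (λ (q - 1))`, so eventually
`Φ ≤ -1` where `q ≥ α + ε` and `Φ ≥ 1` where `q ≤ α - ε`. Comparing `q` with `∓ log r` shows that
`q` reaches `[α - ε, α + ε]`, and the sign of `Φ` at the endpoints keeps it there.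
-/

theorem HasDerivAt.nonpos_of_forall_Ico_le {g : ℝ → ℝ} {g' a x : ℝ} (hd : HasDerivAt g g' x)
    (hax : a < x) (hmin : ∀ y ∈ Ico a x, g x ≤ g y) : g' ≤ 0 := by
  refine le_of_tendsto hd.tendsto_slope_zero_left ?_
  filter_upwards [Ioo_mem_nhdsLT (sub_neg.2 hax)] with t ht
  have := hmin (x + t) ⟨by linarith [ht.1], by linarith [ht.2]⟩
  exact smul_nonpos_of_nonpos_of_nonneg (inv_nonpos.2 ht.2.le) (sub_nonneg.2 this)

theorem pos_of_pos_of_deriv_pos_of_eq_zero {g : ℝ → ℝ} {a b : ℝ} (hab : a ≤ b)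
    (hg : ∀ x ∈ Icc a b, DifferentiableAt ℝ g x) (ha : 0 < g a)
    (hzero : ∀ x ∈ Icc a b, g x = 0 → 0 < deriv g x) : 0 < g b := by
  have hnonneg : ∀ x ∈ Icc a b, 0 ≤ g x := fun x hx => by
    simpa using image_le_of_deriv_right_lt_deriv_boundary' (f := fun y => -g y)
      (f' := fun y => -deriv g y) (B := fun _ => 0) (B' := fun _ => 0)
      (fun y hy => (hg y hy).continuousAt.continuousWithinAt.neg)
      (fun y hy => (hg y (Ico_subset_Icc_self hy)).hasDerivAt.neg.hasDerivWithinAt)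
      (by simpa using ha.le) continuousOn_const (fun _ _ => hasDerivWithinAt_const _ _ _)
      (fun y hy hy0 => by simpa using hzero y (Ico_subset_Icc_self hy) (neg_eq_zero.1 hy0)) hx
  obtain rfl | hab := hab.eq_or_lt
  · exact ha
  have hb := right_mem_Icc.2 hab.le
  refine (hnonneg b hb).lt_of_ne fun hb0 => ?_
  have := (hg b hb).hasDerivAt.nonpos_of_forall_Ico_le hab
    fun y hy => hb0 ▸ hnonneg y (Ico_subset_Icc_self hy)
  linarith [hzero b hb hb0.symm]

theorem tendsto_atTop_of_inv_le_deriv {g g' : ℝ → ℝ}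
    (hg : ∀ᶠ x in atTop, HasDerivAt g (g' x) x) (hg' : ∀ᶠ x in atTop, x⁻¹ ≤ g' x) :
    Tendsto g atTop atTop := by
  obtain ⟨R, hR⟩ := eventually_atTop.1 ((hg.and hg').and (eventually_gt_atTop 0))
  have hmono : MonotoneOn (fun x => g x - Real.log x) (Ici R) := by
    have hderiv : ∀ x ∈ Ici R, HasDerivAt (fun x => g x - Real.log x) (g' x - x⁻¹) x :=
      fun x hx => (hR x hx).1.1.sub (Real.hasDerivAt_log (hR x hx).2.ne')
    refine monotoneOn_of_hasDerivWithinAt_nonneg (convex_Ici R)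
      (fun x hx => (hderiv x hx).continuousAt.continuousWithinAt)
      (fun x hx => (hderiv x (interior_subset hx)).hasDerivWithinAt)
      (fun x hx => sub_nonneg.2 (hR x (interior_subset hx)).1.2)
  refine tendsto_atTop_mono' atTop ?_
    (tendsto_atTop_add_const_left atTop (g R - Real.log R) Real.tendsto_log_atTop)
  filter_upwards [eventually_ge_atTop R] with x hx
  have := hmono self_mem_Ici hx hx
  simp only at this
  linarith

theorem eventually_le_of_deriv_le_neg_inv {g g' : ℝ → ℝ} {b : ℝ}
    (hg : ∀ᶠ x in atTop, HasDerivAt g (g' x) x)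
    (hg' : ∀ᶠ x in atTop, b ≤ g x → g' x ≤ -x⁻¹) : ∀ᶠ x in atTop, g x ≤ b := by
  obtain ⟨R, hR⟩ := eventually_atTop.1 ((hg.and hg').and (eventually_gt_atTop 0))
  obtain ⟨r, hRr, hr⟩ : ∃ r, R ≤ r ∧ g r ≤ b := by
    by_contra! h
    have hneg : Tendsto (fun x => -g x) atTop atTop :=
      tendsto_atTop_of_inv_le_deriv (hg.mono fun x hx => hx.neg) <|
        eventually_atTop.2 ⟨R, fun x hx => le_neg.1 ((hR x hx).1.2 (h x hx).le)⟩
    obtain ⟨x, hx, hRx⟩ := ((hneg.eventually_gt_atTop (-b)).and (eventually_ge_atTop R)).exists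
    linarith [h x hRx]
  filter_upwards [eventually_ge_atTop r] with x hx
  have hderiv : ∀ y ∈ Icc r x, HasDerivAt g (g' y) y := fun y hy => (hR y (hRr.trans hy.1)).1.1
  refine image_le_of_deriv_right_lt_deriv_boundary' (B := fun _ => b) (B' := fun _ => 0)
    (fun y hy => (hderiv y hy).continuousAt.continuousWithinAt)
    (fun y hy => (hderiv y (Ico_subset_Icc_self hy)).hasDerivWithinAt) hr continuousOn_const
    (fun _ _ => hasDerivWithinAt_const _ _ _) (fun y hy hgy => ?_) ⟨hx, le_rfl⟩
  have hRy := hRr.trans hy.1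
  exact ((hR y hRy).1.2 hgy.ge).trans_lt (neg_neg_of_pos (inv_pos.2 (hR y hRy).2))

theorem MonotoneOn.tendsto_atTop_atTop_of_not_bddAbove {g : ℝ → ℝ} {a : ℝ}
    (hg : MonotoneOn g (Ici a)) (h : ¬BddAbove (g '' Ici a)) : Tendsto g atTop atTop := by
  refine tendsto_atTop.2 fun M => ?_
  obtain ⟨_, ⟨x, hx, rfl⟩, hMx⟩ := not_bddAbove_iff.1 h M
  filter_upwards [eventually_ge_atTop x] with y hy
  exact hMx.le.trans (hg hx (mem_Ici.2 ((mem_Ici.1 hx).trans hy)) hy)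

theorem one_lt_div_sub_one {c : ℝ} (hc : 1 < c) : 1 < c / (c - 1) :=
  (one_lt_div (sub_pos.2 hc)).2 (sub_one_lt c)

theorem mul_div_sub_one_sub_one {c : ℝ} (hc : c ≠ 1) : c * (c / (c - 1) - 1) = c / (c - 1) := by
  have := sub_ne_zero.2 hc
  field_simp
  ring

noncomputable def growthRatio (f : ℝ → ℝ) (r : ℝ) : ℝ := r * deriv f r / f r

noncomputable def growthRatioRHS (k lam q v : ℝ) : ℝ :=
  q - q ^ 2 - k * q * (1 + v ^ 2) + q ^ 2 * (1 + v ^ 2) ^ 2 / (lam * v ^ 2 * (q - 1))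

section GrowthRatioRHS

variable {k lam a ε q v : ℝ}

theorem growthRatioRHS_le_neg_one (hl : 0 < lam) (ha : 1 < a) (hka : lam * k * (a - 1) = a)
    (hε : 0 < ε) (hq : a + ε ≤ q) (hv : (1 + lam) * (1 + a / ε) ≤ (lam * k - 1) * v ^ 2) :
    growthRatioRHS k lam q v ≤ -1 := by
  set V := v ^ 2
  have hq1 : 0 < q - 1 := by linarith
  have hV : 0 < V := by
    have : 0 < (lam * k - 1) * V := lt_of_lt_of_le (by positivity) hv
    exact pos_of_mul_pos_right this (by nlinarith)
  have hdrift : q + lam * (q - 1) ≤ (lam * k - 1) * V * (q - a) := by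
    have h1 : (1 + lam) * (1 + a / ε) * (q - a) ≤ (lam * k - 1) * V * (q - a) :=
      mul_le_mul_of_nonneg_right hv (by linarith)
    have h2 : a ≤ a / ε * (q - a) := by
      rw [div_mul_eq_mul_div, le_div_iff₀ hε]; nlinarith
    nlinarith
  have hlin : lam * k * (q - 1) - q = (lam * k - 1) * (q - a) := by linear_combination hka
  have key : q * (1 + V) ^ 2 ≤ lam * V * (q - 1) * (q - 2) + lam * k * V * (q - 1) * (1 + V) := by
    have h3 := mul_le_mul_of_nonneg_left hdrift (by positivity : (0:ℝ) ≤ 1 + V)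
    have h4 : 0 ≤ lam * (q - 1) * (V * (q - 1) + 1) := by positivity
    linear_combination h3 + h4 - ((1 + V) * V) * hlin
  have hfrac : q ^ 2 * (1 + V) ^ 2 / (lam * V * (q - 1)) ≤ q * (q - 2) + k * q * (1 + V) := by
    rw [div_le_iff₀ (by positivity)]
    nlinarith [mul_le_mul_of_nonneg_left key (by linarith : (0:ℝ) ≤ q)]
  unfold growthRatioRHS
  linarith

theorem one_le_growthRatioRHS (hl : 0 < lam) (ha : 1 < a) (hka : lam * k * (a - 1) = a)
    (hε : 0 < ε) (hq1 : 1 < q) (hq : q ≤ a - ε) (hv : lam * a ^ 3 ≤ (lam * k - 1) * ε * v ^ 2) :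
    1 ≤ growthRatioRHS k lam q v := by
  set V := v ^ 2
  have hc : 0 < lam * k - 1 := by nlinarith
  have hV : 0 < V := by
    have : 0 < (lam * k - 1) * ε * V := lt_of_lt_of_le (by positivity) hv
    exact pos_of_mul_pos_right this (by positivity)
  have hcubic : (q - 1) * (q ^ 2 - q + 1) ≤ a ^ 3 := by
    nlinarith [pow_le_pow_left₀ (by linarith : (0:ℝ) ≤ q) (by linarith : q ≤ a) 3]
  have hdrift : (lam * k - 1) * ε * V ≤ q * (1 + V) - lam * k * V * (q - 1) := by
    nlinarith [mul_nonneg hc.le hV.le]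
  have key : lam * V * (q - 1) * (q ^ 2 - q + 1) + lam * k * V * q * (q - 1) * (1 + V)
      ≤ q ^ 2 * (1 + V) ^ 2 := by
    have h1 : lam * V * (q - 1) * (q ^ 2 - q + 1) ≤ V * ((lam * k - 1) * ε * V) := by
      nlinarith [mul_le_mul_of_nonneg_left hcubic (by positivity : (0:ℝ) ≤ lam * V)]
    have h2 : V * ((lam * k - 1) * ε * V) ≤ q * (1 + V) * ((lam * k - 1) * ε * V) :=
      mul_le_mul_of_nonneg_right (by nlinarith) (by positivity)
    nlinarith [mul_le_mul_of_nonneg_left hdrift (by positivity : (0:ℝ) ≤ q * (1 + V))]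
  have hfrac : 1 - q + q ^ 2 + k * q * (1 + V) ≤ q ^ 2 * (1 + V) ^ 2 / (lam * V * (q - 1)) := by
    rw [le_div_iff₀ (mul_pos (mul_pos hl hV) (sub_pos.2 hq1))]
    nlinarith
  unfold growthRatioRHS
  linarith

end GrowthRatioRHS

noncomputable def imcfNumerator (n : ℕ) (lam : ℝ) (f : ℝ → ℝ) (r : ℝ) : ℝ :=
  r * (1 + deriv f r ^ 2) - lam * ((n : ℝ) - 1) * deriv f r * (r * deriv f r - f r)

namespace IsIMCFSolGlobal

variable {n : ℕ} {lam mu : ℝ} {f : ℝ → ℝ} {r : ℝ}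

theorem continuousOn (hf : IsIMCFSolGlobal n lam mu f) : ContinuousOn f (Ici 0) := hf.1

theorem continuousOn_deriv (hf : IsIMCFSolGlobal n lam mu f) : ContinuousOn (deriv f) (Ici 0) :=
  hf.2.1

theorem hasDerivAt (hf : IsIMCFSolGlobal n lam mu f) (hr : 0 < r) :
    HasDerivAt f (deriv f r) r :=
  (hf.2.2.1 r hr).hasDerivAt

theorem hasDerivAt_deriv (hf : IsIMCFSolGlobal n lam mu f) (hr : 0 < r) :
    HasDerivAt (deriv f) (deriv (deriv f) r) r :=
  (hf.2.2.2.1 r hr).hasDerivAt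

theorem deriv_deriv_eq_sub (hf : IsIMCFSolGlobal n lam mu f) (hr : 0 < r) :
    deriv (deriv f) r = 1 / lam * (1 + deriv f r ^ 2) ^ 2 / (r * deriv f r - f r)
      - ((n : ℝ) - 1) / r * (1 + deriv f r ^ 2) * deriv f r :=
  eq_sub_of_add_eq (hf.2.2.2.2.2.1 r hr)

theorem deriv_zero (hf : IsIMCFSolGlobal n lam mu f) : deriv f 0 = 0 := hf.2.2.2.2.2.2.2.1

theorem mul_deriv_sub_pos (hf : IsIMCFSolGlobal n lam mu f) (hr : 0 ≤ r) :
    0 < r * deriv f r - f r :=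
  hf.2.2.2.2.2.2.2.2 r hr

theorem deriv_deriv_eq (hf : IsIMCFSolGlobal n lam mu f) (hl : lam ≠ 0) (hr : 0 < r) :
    deriv (deriv f) r
      = (1 + deriv f r ^ 2) * imcfNumerator n lam f r / (lam * r * (r * deriv f r - f r)) := by
  have hw := (hf.mul_deriv_sub_pos hr.le).ne'
  rw [hf.deriv_deriv_eq_sub hr, imcfNumerator]
  generalize r * deriv f r - f r = w at hw ⊢
  field_simp

theorem deriv_deriv_pos_iff (hf : IsIMCFSolGlobal n lam mu f) (hl : 0 < lam) (hr : 0 < r) :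
    0 < deriv (deriv f) r ↔ 0 < imcfNumerator n lam f r := by
  have hw := hf.mul_deriv_sub_pos hr.le
  rw [hf.deriv_deriv_eq hl.ne' hr, div_pos_iff_of_pos_right (by positivity),
    mul_pos_iff_of_pos_left (by positivity)]

theorem imcfNumerator_pos_of_deriv_nonpos (hf : IsIMCFSolGlobal n lam mu f) (hl : 0 ≤ lam)
    (hn : 1 ≤ n) (hr : 0 < r) (hv : deriv f r ≤ 0) : 0 < imcfNumerator n lam f r := by
  have hc : 0 ≤ lam * ((n : ℝ) - 1) := mul_nonneg hl (sub_nonneg.2 (Nat.one_le_cast.2 hn))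
  have : lam * ((n : ℝ) - 1) * deriv f r * (r * deriv f r - f r) ≤ 0 :=
    mul_nonpos_of_nonpos_of_nonneg (mul_nonpos_of_nonneg_of_nonpos hc hv)
      (hf.mul_deriv_sub_pos hr.le).le
  rw [imcfNumerator]
  nlinarith [sq_nonneg (deriv f r)]

theorem hasDerivAt_imcfNumerator (hf : IsIMCFSolGlobal n lam mu f) (hr : 0 < r) :
    HasDerivAt (imcfNumerator n lam f) (1 + deriv f r ^ 2 + deriv (deriv f) r *
      (2 * r * deriv f r - lam * ((n : ℝ) - 1) * (2 * r * deriv f r - f r))) r := by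
  have hv := hf.hasDerivAt_deriv hr
  have := ((hasDerivAt_id' r).mul ((hv.pow 2).const_add 1)).sub
    ((hv.const_mul (lam * ((n : ℝ) - 1))).mul (((hasDerivAt_id' r).mul hv).sub (hf.hasDerivAt hr)))
  refine this.congr_deriv ?_
  simp only [Pi.pow_apply, Pi.sub_apply, Pi.mul_apply]
  push_cast
  ring

theorem deriv_pos (hf : IsIMCFSolGlobal n lam mu f) (hl : 0 < lam) (hn : 1 ≤ n) (hr : 0 < r) :
    0 < deriv f r := by
  have hconvex : ∀ x, 0 < x → deriv f x ≤ 0 → 0 < deriv (deriv f) x := fun x hx hv =>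
    (hf.deriv_deriv_pos_iff hl hx).2 (hf.imcfNumerator_pos_of_deriv_nonpos hl.le hn hx hv)
  by_contra! hvr
  by_cases h : ∃ x ∈ Ioo 0 r, 0 < deriv f x
  · obtain ⟨x, hx, hvx⟩ := h
    have := pos_of_pos_of_deriv_pos_of_eq_zero hx.2.le
      (fun y hy => (hf.hasDerivAt_deriv (hx.1.trans_le hy.1)).differentiableAt) hvx
      (fun y hy hy0 => hconvex y (hx.1.trans_le hy.1) hy0.le)
    linarith
  · push Not at h
    have hmono : StrictMonoOn (deriv f) (Icc 0 r) :=
      strictMonoOn_of_deriv_pos (convex_Icc 0 r) (hf.continuousOn_deriv.mono Icc_subset_Ici_self)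
        fun x hx => by rw [interior_Icc] at hx; exact hconvex x hx.1 (h x hx)
    have := hmono (left_mem_Icc.2 hr.le) (right_mem_Icc.2 hr.le) hr
    rw [hf.deriv_zero] at this
    linarith

theorem imcfNumerator_pos (hf : IsIMCFSolGlobal n lam mu f) (hl : 0 < lam) (hn : 1 ≤ n)
    (hr : 0 < r) : 0 < imcfNumerator n lam f r := by
  by_contra! hDr
  by_cases h : ∃ x ∈ Ioo 0 r, 0 < imcfNumerator n lam f x
  · obtain ⟨x, hx, hDx⟩ := h
    have := pos_of_pos_of_deriv_pos_of_eq_zero hx.2.le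
      (fun y hy => (hf.hasDerivAt_imcfNumerator (hx.1.trans_le hy.1)).differentiableAt) hDx
      fun y hy hy0 => by
        -- at a zero of the numerator `f'' = 0`, so its derivative is `1 + f'²`
        have hy := hx.1.trans_le hy.1
        rw [(hf.hasDerivAt_imcfNumerator hy).deriv, hf.deriv_deriv_eq hl.ne' hy, hy0]
        simp only [mul_zero, zero_div, zero_mul, add_zero]
        positivity
    linarith
  · push Not at h
    have hanti : AntitoneOn (deriv f) (Icc 0 r) := by
      refine antitoneOn_of_deriv_nonpos (convex_Icc 0 r)
        (hf.continuousOn_deriv.mono Icc_subset_Ici_self) ?_ fun x hx => ?_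
      · rw [interior_Icc]
        exact fun x hx => (hf.hasDerivAt_deriv hx.1).differentiableAt.differentiableWithinAt
      · rw [interior_Icc] at hx
        exact not_lt.1 fun hpos => (h x hx).not_gt ((hf.deriv_deriv_pos_iff hl hx.1).1 hpos)
    have := hanti (left_mem_Icc.2 hr.le) (right_mem_Icc.2 hr.le) hr.le
    rw [hf.deriv_zero] at this
    linarith [hf.deriv_pos hl hn hr]

theorem strictMonoOn_deriv (hf : IsIMCFSolGlobal n lam mu f) (hl : 0 < lam) (hn : 1 ≤ n) :
    StrictMonoOn (deriv f) (Ici 0) :=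
  strictMonoOn_of_deriv_pos (convex_Ici 0) hf.continuousOn_deriv fun x hx => by
    rw [interior_Ici] at hx
    exact (hf.deriv_deriv_pos_iff hl hx).2 (hf.imcfNumerator_pos hl hn hx)

theorem deriv_nonneg (hf : IsIMCFSolGlobal n lam mu f) (hl : 0 < lam) (hn : 1 ≤ n) (hr : 0 ≤ r) :
    0 ≤ deriv f r :=
  hf.deriv_zero ▸ (hf.strictMonoOn_deriv hl hn).monotoneOn self_mem_Ici hr hr

theorem add_deriv_mul_sub_le (hf : IsIMCFSolGlobal n lam mu f) (hl : 0 < lam) (hn : 1 ≤ n)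
    {s : ℝ} (hs : 0 ≤ s) (hsr : s ≤ r) : f s + deriv f s * (r - s) ≤ f r := by
  have hmono := (hf.strictMonoOn_deriv hl hn).monotoneOn
  have := (convex_Ici s).mul_sub_le_image_sub_of_le_deriv
    (hf.continuousOn.mono (Ici_subset_Ici.2 hs))
    (fun x hx => by
      rw [interior_Ici] at hx
      exact (hf.hasDerivAt (hs.trans_lt hx)).differentiableAt.differentiableWithinAt)
    (C := deriv f s) (fun x hx => by
      rw [interior_Ici] at hx
      exact hmono hs (hs.trans hx.le) hx.le) s self_mem_Ici r hsr hsr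
  linarith

theorem tendsto_atTop (hf : IsIMCFSolGlobal n lam mu f) (hl : 0 < lam) (hn : 1 ≤ n) :
    Tendsto f atTop atTop := by
  refine tendsto_atTop_mono' atTop ?_ <| tendsto_atTop_add_const_left atTop (f 1) <|
    (tendsto_atTop_add_const_right atTop (-1) tendsto_id).const_mul_atTop
      (hf.deriv_pos hl hn one_pos)
  filter_upwards [eventually_ge_atTop 1] with r hr
  simpa [sub_eq_add_neg] using hf.add_deriv_mul_sub_le hl hn zero_le_one hr

theorem eventually_mul_deriv_sub_le_of_bddAbove (hf : IsIMCFSolGlobal n lam mu f) (hl : 0 < lam)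
    (hn : 1 ≤ n) (hbdd : BddAbove (deriv f '' Ici 0)) {δ : ℝ} (hδ : 0 < δ) :
    ∀ᶠ r in atTop, r * deriv f r - f r ≤ δ * r := by
  have hL := isLUB_csSup ⟨_, mem_image_of_mem _ (self_mem_Ici (a := (0 : ℝ)))⟩ hbdd
  obtain ⟨_, ⟨s, hs, rfl⟩, hLs, -⟩ := hL.exists_between (sub_lt_self _ (half_pos hδ))
  filter_upwards [eventually_ge_atTop s, eventually_ge_atTop (2 * (s * deriv f s - f s) / δ)]
    with r hsr hr
  have htan := hf.add_deriv_mul_sub_le hl hn hs hsr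
  have hvr := hL.1 (mem_image_of_mem _ (mem_Ici.2 ((mem_Ici.1 hs).trans hsr)))
  have := mul_le_mul_of_nonneg_left (show deriv f r - deriv f s ≤ δ / 2 by linarith)
    ((mem_Ici.1 hs).trans hsr)
  rw [div_le_iff₀ hδ] at hr
  linarith

theorem eventually_inv_le_deriv_deriv_of_bddAbove (hf : IsIMCFSolGlobal n lam mu f)
    (hl : 0 < lam) (hn : 1 ≤ n) (hbdd : BddAbove (deriv f '' Ici 0)) :
    ∀ᶠ r in atTop, r⁻¹ ≤ deriv (deriv f) r := by
  obtain ⟨L, hL⟩ := hbdd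
  have hvL : ∀ r, 0 ≤ r → deriv f r ≤ L := fun r hr => hL (mem_image_of_mem _ hr)
  have hL0 : 0 ≤ L := hf.deriv_zero ▸ hvL 0 le_rfl
  have hn0 : (0 : ℝ) ≤ n - 1 := sub_nonneg.2 (Nat.one_le_cast.2 hn)
  set K := ((n : ℝ) - 1) * (1 + L ^ 2) * L
  have hK : 0 ≤ K := by positivity
  filter_upwards [hf.eventually_mul_deriv_sub_le_of_bddAbove hl hn ⟨L, hL⟩
    (δ := (lam * (K + 1))⁻¹) (by positivity), eventually_gt_atTop 0] with r hw hr
  have hw0 := hf.mul_deriv_sub_pos hr.le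
  have hv0 := hf.deriv_nonneg hl hn hr.le
  have hvr := hvL r hr.le
  have h1 : (K + 1) / r ≤ 1 / lam * (1 + deriv f r ^ 2) ^ 2 / (r * deriv f r - f r) := by
    calc (K + 1) / r ≤ 1 / lam * 1 / (r * deriv f r - f r) := by
          rw [mul_one, div_div, div_le_div_iff₀ hr (by positivity)]
          have := mul_le_mul_of_nonneg_left hw (by positivity : (0 : ℝ) ≤ lam * (K + 1))
          rw [← mul_assoc, mul_inv_cancel₀ (by positivity), one_mul] at this
          linarith
      _ ≤ 1 / lam * (1 + deriv f r ^ 2) ^ 2 / (r * deriv f r - f r) := by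
          gcongr
          exact one_le_pow₀ (le_add_of_nonneg_right (sq_nonneg _))
  have h2 : ((n : ℝ) - 1) / r * (1 + deriv f r ^ 2) * deriv f r ≤ K / r := by
    rw [div_mul_eq_mul_div, div_mul_eq_mul_div]
    gcongr
    show _ ≤ ((n : ℝ) - 1) * (1 + L ^ 2) * L
    gcongr
  have h3 : r⁻¹ = (K + 1) / r - K / r := by field_simp; ring
  rw [hf.deriv_deriv_eq_sub hr]
  linarith

theorem tendsto_deriv_atTop (hf : IsIMCFSolGlobal n lam mu f) (hl : 0 < lam) (hn : 1 ≤ n) :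
    Tendsto (deriv f) atTop atTop := by
  -- a bounded `f'` would force `f'' ≥ 1 / r`, hence `f' → ∞` all the same
  by_cases hbdd : BddAbove (deriv f '' Ici 0)
  · exact tendsto_atTop_of_inv_le_deriv
      ((eventually_gt_atTop 0).mono fun r hr => hf.hasDerivAt_deriv hr)
      (hf.eventually_inv_le_deriv_deriv_of_bddAbove hl hn hbdd)
  · exact (hf.strictMonoOn_deriv hl hn).monotoneOn.tendsto_atTop_atTop_of_not_bddAbove hbdd

theorem one_lt_growthRatio (hf : IsIMCFSolGlobal n lam mu f) (hr : 0 ≤ r) (hfr : 0 < f r) :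
    1 < growthRatio f r := by
  rw [growthRatio, one_lt_div hfr]
  linarith [hf.mul_deriv_sub_pos hr]

theorem hasDerivAt_growthRatio (hf : IsIMCFSolGlobal n lam mu f) (hl : lam ≠ 0) (hr : 0 < r)
    (hv : deriv f r ≠ 0) (hfr : f r ≠ 0) :
    HasDerivAt (growthRatio f)
      (growthRatioRHS ((n : ℝ) - 1) lam (growthRatio f r) (deriv f r) / r) r := by
  have hw := (hf.mul_deriv_sub_pos hr.le).ne'
  have hq1 : growthRatio f r - 1 = (r * deriv f r - f r) / f r := by
    rw [growthRatio]; field_simp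
  refine (((hasDerivAt_id' r).mul (hf.hasDerivAt_deriv hr)).div (hf.hasDerivAt hr)
    hfr).congr_deriv ?_
  rw [growthRatioRHS, hq1, hf.deriv_deriv_eq_sub hr, growthRatio, Pi.mul_apply]
  have := hr.ne'
  field_simp
  ring

theorem eventually_hasDerivAt_growthRatio (hf : IsIMCFSolGlobal n lam mu f) (hl : 0 < lam)
    (hn : 1 ≤ n) : ∀ᶠ r in atTop, HasDerivAt (growthRatio f)
      (growthRatioRHS ((n : ℝ) - 1) lam (growthRatio f r) (deriv f r) / r) r := by
  filter_upwards [eventually_gt_atTop 0, (hf.tendsto_atTop hl hn).eventually_gt_atTop 0]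
    with r hr hfr
  exact hf.hasDerivAt_growthRatio hl.ne' hr (hf.deriv_pos hl hn hr).ne' hfr.ne'

theorem eventually_growthRatio_le (hf : IsIMCFSolGlobal n lam mu f) (hl : 0 < lam) (hn : 1 ≤ n)
    (hc : 1 < lam * ((n : ℝ) - 1)) {ε : ℝ} (hε : 0 < ε) :
    ∀ᶠ r in atTop, growthRatio f r ≤ lam * ((n : ℝ) - 1) / (lam * ((n : ℝ) - 1) - 1) + ε := by
  set a := lam * ((n : ℝ) - 1) / (lam * ((n : ℝ) - 1) - 1)
  have hv := ((tendsto_pow_atTop two_ne_zero).comp (hf.tendsto_deriv_atTop hl hn)).const_mul_atTop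
    (sub_pos.2 hc)
  refine eventually_le_of_deriv_le_neg_inv (hf.eventually_hasDerivAt_growthRatio hl hn) ?_
  filter_upwards [hv.eventually_ge_atTop ((1 + lam) * (1 + a / ε)), eventually_gt_atTop 0]
    with r hvr hr hq
  calc _ ≤ -1 / r := div_le_div_of_nonneg_right (growthRatioRHS_le_neg_one hl
          (one_lt_div_sub_one hc) (mul_div_sub_one_sub_one hc.ne') hε hq hvr) hr.le
    _ = -r⁻¹ := by rw [neg_div, one_div]

theorem eventually_le_growthRatio (hf : IsIMCFSolGlobal n lam mu f) (hl : 0 < lam) (hn : 1 ≤ n)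
    (hc : 1 < lam * ((n : ℝ) - 1)) {ε : ℝ} (hε : 0 < ε) :
    ∀ᶠ r in atTop, lam * ((n : ℝ) - 1) / (lam * ((n : ℝ) - 1) - 1) - ε ≤ growthRatio f r := by
  set a := lam * ((n : ℝ) - 1) / (lam * ((n : ℝ) - 1) - 1)
  have hv := ((tendsto_pow_atTop two_ne_zero).comp (hf.tendsto_deriv_atTop hl hn)).const_mul_atTop
    (mul_pos (sub_pos.2 hc) hε)
  have := eventually_le_of_deriv_le_neg_inv (g := fun r => -growthRatio f r) (b := -(a - ε))
    ((hf.eventually_hasDerivAt_growthRatio hl hn).mono fun r h => h.neg) ?_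
  · exact this.mono fun r h => neg_le_neg_iff.1 h
  filter_upwards [hv.eventually_ge_atTop (lam * a ^ 3), eventually_gt_atTop 0,
    (hf.tendsto_atTop hl hn).eventually_gt_atTop 0] with r hvr hr hfr hq
  have := one_le_growthRatioRHS hl (one_lt_div_sub_one hc) (mul_div_sub_one_sub_one hc.ne') hε
    (hf.one_lt_growthRatio hr.le hfr) (by linarith) hvr
  rw [neg_le_neg_iff, ← one_div]
  exact div_le_div_of_nonneg_right this hr.le

end IsIMCFSolGlobal

theorem imcf_growth_rate_general (n : ℕ) (hn : 2 ≤ n)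
    (lam mu : ℝ) (hlam : 1 / ((n : ℝ) - 1) < lam)
    (f : ℝ → ℝ) (hf : IsIMCFSolGlobal n lam mu f) :
    Filter.Tendsto (fun r => r * deriv f r / f r) Filter.atTop
      (nhds (lam * ((n : ℝ) - 1) / (lam * ((n : ℝ) - 1) - 1))) := by
  have hn1 : (0 : ℝ) < n - 1 := by
    have : (2 : ℝ) ≤ n := by exact_mod_cast hn
    linarith
  have hl : 0 < lam := (one_div_pos.2 hn1).trans hlam
  have hc : 1 < lam * ((n : ℝ) - 1) := (div_lt_iff₀ hn1).1 hlam
  have hn' : 1 ≤ n := by omega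
  refine tendsto_order.2 ⟨fun b hb => ?_, fun b hb => ?_⟩
  · filter_upwards [hf.eventually_le_growthRatio hl hn' hc (half_pos (sub_pos.2 hb))] with r hr
    exact lt_of_lt_of_le (by linarith) hr
  · filter_upwards [hf.eventually_growthRatio_le hl hn' hc (half_pos (sub_pos.2 hb))] with r hr
    exact lt_of_le_of_lt hr (by linarith)

/-- Theorem 1.2: `lim_{r→∞} r f'(r)/f(r) = λ(n−1)/(λ(n−1)−1)`. -/
theorem imcf_growth_rate (n : ℕ) (hn : 2 ≤ n)
    (lam mu : ℝ) (hlam : 1 / ((n : ℝ) - 1) < lam) (hmu : mu < 0)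
    (f : ℝ → ℝ) (hf : IsIMCFSolGlobal n lam mu f) :
    Filter.Tendsto (fun r => r * deriv f r / f r) Filter.atTop
      (nhds (lam * ((n : ℝ) - 1) / (lam * ((n : ℝ) - 1) - 1))) :=
  imcf_growth_rate_general n hn lam mu hlam f hf
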